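/- arXiv:1903.00680 — 2 statements merged into one kernel-verified Lean document; each statement's English description precedes it below -/
import Mathlib

section
/- Let V : ℝ → ℝ be continuously differentiable, nonnegative, and suppose V̇(t) ≤ -θ(‖x(t)‖² + ‖z(t)‖²) for some θ > 0, where x, z : ℝ → ℝ^n are differentiable with uniformly bounded derivatives. Then x(t) → 0 and z(t) → 0 as t → ∞. -/
open Filter

lemma barbalat_aux {E : Type*} [NormedAddCommGroup E] [NormedSpace ℝ E]
    (V : ℝ → ℝ) (x : ℝ → E) (θ M : ℝ) (hθ : 0 < θ)
    (hV : ContDiff ℝ 1 V) (hVnn : ∀ t, 0 ≤ V t)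
    (hx : Differentiable ℝ x) (hbx : ∀ t, ‖deriv x t‖ ≤ M)
    (hdiss : ∀ t, deriv V t ≤ -θ * ‖x t‖ ^ 2) :
    Tendsto x atTop (nhds 0) := by
  have hM0 : 0 ≤ M := le_trans (norm_nonneg _) (hbx 0)
  -- Lipschitz bound
  have hlip : LipschitzWith M.toNNReal x :=
    lipschitzWith_of_nnnorm_deriv_le hx (fun t => by
      have h : (‖deriv x t‖₊ : ℝ) ≤ (M.toNNReal : ℝ) := by
        rw [coe_nnnorm, Real.coe_toNNReal _ hM0]; exact hbx t
      exact_mod_cast h)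
  have hlip' : ∀ s t : ℝ, ‖x s - x t‖ ≤ M * |s - t| := by
    intro s t
    have := hlip.dist_le_mul s t
    rw [Real.coe_toNNReal _ hM0] at this
    simpa [dist_eq_norm, Real.dist_eq] using this
  -- V is antitone
  have hanti : Antitone V :=
    antitone_of_deriv_nonpos (hV.differentiable one_ne_zero) (fun t =>
      (hdiss t).trans (by nlinarith [sq_nonneg ‖x t‖, norm_nonneg (x t)]))
  have hbdd : BddBelow (Set.range V) := ⟨0, by rintro _ ⟨t, rfl⟩; exact hVnn t⟩
  set ℓ := ⨅ t, V t with hℓ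
  have hVlim : Tendsto V atTop (nhds ℓ) := tendsto_atTop_ciInf hanti hbdd
  have hℓle : ∀ t, ℓ ≤ V t := fun t => ciInf_le hbdd t
  -- integral inequality
  have hcontg : Continuous fun t => ‖x t‖ ^ 2 := (hx.continuous.norm.pow 2)
  have hcontV' : Continuous (deriv V) := hV.continuous_deriv le_rfl
  have key : ∀ a b : ℝ, a ≤ b → θ * ∫ t in a..b, ‖x t‖ ^ 2 ≤ V a - V b := by
    intro a b hab
    have hftc : ∫ t in a..b, deriv V t = V b - V a :=
      intervalIntegral.integral_deriv_eq_sub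
        (fun t _ => (hV.differentiable one_ne_zero t)) (hcontV'.intervalIntegrable a b)
    have hmono : ∫ t in a..b, θ * ‖x t‖ ^ 2 ≤ ∫ t in a..b, -deriv V t := by
      apply intervalIntegral.integral_mono_on hab
      · exact (continuous_const.mul hcontg).intervalIntegrable a b
      · exact (hcontV'.neg).intervalIntegrable a b
      · intro t _
        have := hdiss t
        nlinarith
    rw [intervalIntegral.integral_const_mul] at hmono
    rw [intervalIntegral.integral_neg, hftc] at hmono
    linarith
  -- conclude
  rw [NormedAddCommGroup.tendsto_nhds_zero]
  intro ε hε
  set M' : ℝ := M + 1 with hM'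
  have hM'0 : 0 < M' := by positivity
  set δ : ℝ := ε / (2 * M') with hδdef
  have hδ0 : 0 < δ := by positivity
  have hεδ : M' * δ = ε / 2 := by rw [hδdef]; field_simp
  -- choose N
  have hev : ∀ᶠ t in atTop, V t < ℓ + θ * (δ * (ε / 2) ^ 2) := by
    have hpos : 0 < θ * (δ * (ε / 2) ^ 2) := by positivity
    exact hVlim.eventually_lt_const (by linarith)
  obtain ⟨N, hN⟩ := hev.exists_forall_of_atTop
  filter_upwards [eventually_ge_atTop N] with t ht
  by_contra hcon
  push_neg at hcon
  -- on [t, t+δ], ‖x s‖ ≥ ε/2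
  have hlow : ∀ s ∈ Set.Icc t (t + δ), (ε / 2) ^ 2 ≤ ‖x s‖ ^ 2 := by
    intro s hs
    have h1 : ‖x s - x t‖ ≤ M * |s - t| := hlip' s t
    have h2 : |s - t| ≤ δ := by
      rw [abs_of_nonneg (by linarith [hs.1])]
      linarith [hs.2]
    have h3 : ‖x s - x t‖ ≤ ε / 2 := by
      calc ‖x s - x t‖ ≤ M * |s - t| := h1
        _ ≤ M' * δ := by
            apply mul_le_mul (by linarith) h2 (abs_nonneg _) (le_of_lt hM'0)
        _ = ε / 2 := hεδ
    have h4 : ε / 2 ≤ ‖x s‖ := by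
      have : ‖x t‖ - ‖x s‖ ≤ ‖x s - x t‖ := by
        have := norm_sub_norm_le (x t) (x s)
        rwa [norm_sub_rev] at this
      linarith
    nlinarith [norm_nonneg (x s)]
  have hint : δ * (ε / 2) ^ 2 ≤ ∫ s in t..(t + δ), ‖x s‖ ^ 2 := by
    have := intervalIntegral.integral_mono_on (by linarith : t ≤ t + δ)
      (intervalIntegrable_const (μ := MeasureTheory.volume) (c := (ε / 2) ^ 2))
      (hcontg.intervalIntegrable t (t + δ)) hlow
    rwa [intervalIntegral.integral_const, smul_eq_mul, add_sub_cancel_left] at this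
  have hkey := key t (t + δ) (by linarith)
  have hVN := hN t ht
  have hℓt := hℓle (t + δ)
  nlinarith

/-- Barbalat-type argument: if `V ≥ 0` is `C¹` with `V̇ ≤ -θ(‖x‖² + ‖z‖²)` and `x, z`
have uniformly bounded derivatives, then `x(t) → 0` and `z(t) → 0`. -/
theorem stmt_6 {n : ℕ} (V : ℝ → ℝ) (x z : ℝ → EuclideanSpace ℝ (Fin n)) (θ : ℝ)
    (hθ : 0 < θ) (hV : ContDiff ℝ 1 V) (hVnn : ∀ t, 0 ≤ V t)
    (hx : Differentiable ℝ x) (hz : Differentiable ℝ z)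
    (hbx : ∃ M, ∀ t, ‖deriv x t‖ ≤ M) (hbz : ∃ M, ∀ t, ‖deriv z t‖ ≤ M)
    (hdiss : ∀ t, deriv V t ≤ -θ * (‖x t‖ ^ 2 + ‖z t‖ ^ 2)) :
    Tendsto x atTop (nhds 0) ∧ Tendsto z atTop (nhds 0) := by
  obtain ⟨Mx, hMx⟩ := hbx
  obtain ⟨Mz, hMz⟩ := hbz
  constructor
  · exact barbalat_aux V x θ Mx hθ hV hVnn hx hMx (fun t => by
      have := hdiss t; nlinarith [sq_nonneg ‖z t‖])
  · exact barbalat_aux V z θ Mz hθ hV hVnn hz hMz (fun t => by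
      have := hdiss t; nlinarith [sq_nonneg ‖x t‖])
end

section
/- Along solutions of μ̇ = [g(z(t))]⁺_μ with μ(0) ≥ 0 componentwise, where g is convex and differentiable, and with η(t) := ∇g(z(t))μ(t): the storage function S(μ) = ½‖μ‖² satisfies Ṡ(μ(t)) ≤ ⟨η(t), z(t)⟩, provided g(0) ≤ 0 componentwise. -/
open scoped RealInnerProductSpace

/-- Scalar projection operator `[σ]⁺_ε`. -/
noncomputable def projPlus (σ ε : ℝ) : ℝ := if 0 < ε then σ else max 0 σ

/-- ODE invariance: if `f(0) ≥ 0` and `f' ≥ 0` whenever `f ≤ 0`, then `f ≥ 0` on `[0,∞)`. -/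
lemma aux_nonneg_of_deriv (f : ℝ → ℝ) (hf : Differentiable ℝ f) (h0 : 0 ≤ f 0)
    (hd : ∀ s, f s ≤ 0 → 0 ≤ deriv f s) : ∀ t ≥ (0 : ℝ), 0 ≤ f t := by
  intro t ht
  by_contra h
  push_neg at h
  have ht0 : 0 < t := by
    rcases eq_or_lt_of_le ht with h' | h'
    · exact absurd h0 (by rw [← h'] at h; linarith)
    · exact h'
  set A : Set ℝ := Set.Icc 0 t ∩ f ⁻¹' Set.Ici 0 with hA
  have hA0 : (0 : ℝ) ∈ A := ⟨⟨le_refl _, ht⟩, h0⟩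
  have hAc : IsCompact A :=
    isCompact_Icc.inter_right (isClosed_Ici.preimage hf.continuous)
  have hsmem : sSup A ∈ A := hAc.sSup_mem ⟨0, hA0⟩
  set s := sSup A with hs
  have hsI : s ∈ Set.Icc 0 t := hsmem.1
  have hfs : 0 ≤ f s := hsmem.2
  have hst : s < t := by
    rcases eq_or_lt_of_le hsI.2 with h' | h'
    · exact absurd hfs (by rw [h']; linarith)
    · exact h'
  have key : ∀ u ∈ Set.Ioc s t, f u < 0 := by
    intro u hu
    by_contra hfu
    push_neg at hfu
    have : u ∈ A := ⟨⟨le_trans hsI.1 hu.1.le, hu.2⟩, hfu⟩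
    have : u ≤ s := le_csSup hAc.bddAbove this
    exact absurd hu.1 (not_lt.mpr this)
  have hmono : MonotoneOn f (Set.Icc s t) := by
    apply monotoneOn_of_deriv_nonneg (convex_Icc s t) hf.continuous.continuousOn
      (hf.differentiableOn.mono interior_subset)
    intro u hu
    rw [interior_Icc] at hu
    exact hd u (le_of_lt (key u ⟨hu.1, hu.2.le⟩))
  have : f s ≤ f t := hmono ⟨le_refl _, hst.le⟩ ⟨hst.le, le_refl _⟩ hst.le
  linarith

/-- Convex gradient inequality: `f x ≤ ⟪∇f x, x⟫` when `f 0 ≤ 0`. -/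
lemma aux_grad_ineq {d : ℕ} (f : EuclideanSpace ℝ (Fin d) → ℝ)
    (hfd : Differentiable ℝ f) (hfc : ConvexOn ℝ Set.univ f) (hf0 : f 0 ≤ 0)
    (x : EuclideanSpace ℝ (Fin d)) : f x ≤ ⟪gradient f x, x⟫ := by
  set φ : ℝ → ℝ := fun u => f (u • x) with hφ
  have hφc : ConvexOn ℝ Set.univ φ := by
    refine ⟨convex_univ, fun p _ r _ a b ha hb hab => ?_⟩
    have := hfc.2 (Set.mem_univ (p • x)) (Set.mem_univ (r • x)) ha hb hab
    simpa [hφ, add_smul, smul_smul] using this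
  have hφd : HasDerivAt φ ((fderiv ℝ f x) x) 1 := by
    have h1 : HasDerivAt (fun u : ℝ => u • x) x 1 := by
      simpa using (hasDerivAt_id (1 : ℝ)).smul_const x
    have := ((hfd ((1 : ℝ) • x)).hasFDerivAt).comp_hasDerivAt 1 h1
    simp only [one_smul] at this
    exact this
  have hslope : slope φ 0 1 ≤ (fderiv ℝ f x) x :=
    hφc.slope_le_of_hasDerivAt (Set.mem_univ 0) (Set.mem_univ 1) zero_lt_one hφd
  have hslope' : slope φ 0 1 = f x - f 0 := by
    simp [slope_def_field, hφ]
  have hfderiv : (fderiv ℝ f x) x = ⟪gradient f x, x⟫ := by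
    have hg := (hfd x).hasGradientAt
    rw [hasGradientAt_iff_hasFDerivAt] at hg
    rw [hg.fderiv]
    simp [InnerProductSpace.toDual_apply_apply]
  rw [hslope', hfderiv] at hslope
  linarith

/-- Passivity of the projected dual dynamics `μ̇ = [g(z)]⁺_μ`:
with `η = ∇g(z)μ`, the storage `S(μ) = ½‖μ‖²` satisfies `Ṡ ≤ ⟨η, z⟩`. -/
theorem stmt_12 {d q : ℕ} (g : Fin q → EuclideanSpace ℝ (Fin d) → ℝ)
    (hgd : ∀ i, Differentiable ℝ (g i))
    (hgc : ∀ i, ConvexOn ℝ Set.univ (g i))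
    (hg0 : ∀ i, g i 0 ≤ 0)
    (z : ℝ → EuclideanSpace ℝ (Fin d)) (μ : ℝ → Fin q → ℝ)
    (hzd : Differentiable ℝ z)
    (hμd : ∀ i, Differentiable ℝ (fun t => μ t i))
    (hμ0 : ∀ i, 0 ≤ μ 0 i)
    (hode : ∀ t i, deriv (fun s => μ s i) t = projPlus (g i (z t)) (μ t i)) :
    ∀ t ≥ (0 : ℝ),
      deriv (fun s => (1 / 2 : ℝ) * ∑ i, (μ s i) ^ 2) t ≤
        ⟪∑ i, μ t i • gradient (g i) (z t), z t⟫ := by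
  intro t ht
  -- μ stays nonnegative
  have hpos : ∀ i, 0 ≤ μ t i := by
    intro i
    refine aux_nonneg_of_deriv (fun s => μ s i) (hμd i) (hμ0 i) ?_ t ht
    intro s hs
    rw [hode s i]
    unfold projPlus
    rw [if_neg (not_lt.mpr hs)]
    exact le_max_left 0 _
  -- compute the derivative of the storage function
  have hS : HasDerivAt (fun s => (1 / 2 : ℝ) * ∑ i, (μ s i) ^ 2)
      ((1 / 2 : ℝ) * ∑ i, (2 * μ t i * deriv (fun s => μ s i) t)) t := by
    refine HasDerivAt.const_mul _ ?_
    refine HasDerivAt.fun_sum fun i _ => ?_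
    have := ((hμd i t).hasDerivAt).fun_pow 2
    simpa [mul_comm, mul_assoc, mul_left_comm] using this
  rw [hS.deriv]
  -- rewrite the RHS inner product
  have hRHS : ⟪∑ i, μ t i • gradient (g i) (z t), z t⟫
      = ∑ i, μ t i * ⟪gradient (g i) (z t), z t⟫ := by
    rw [sum_inner]
    congr 1
    ext i
    rw [real_inner_smul_left]
  rw [hRHS]
  have hterm : ∀ i, μ t i * deriv (fun s => μ s i) t ≤ μ t i * ⟪gradient (g i) (z t), z t⟫ := by
    intro i
    rw [hode t i]
    have hkey : μ t i * projPlus (g i (z t)) (μ t i) = μ t i * g i (z t) := by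
      unfold projPlus
      rcases lt_or_eq_of_le (hpos i) with h | h
      · rw [if_pos h]
      · rw [← h]; ring
    rw [hkey]
    exact mul_le_mul_of_nonneg_left (aux_grad_ineq (g i) (hgd i) (hgc i) (hg0 i) (z t)) (hpos i)
  calc (1 / 2 : ℝ) * ∑ i, (2 * μ t i * deriv (fun s => μ s i) t)
      = ∑ i, μ t i * deriv (fun s => μ s i) t := by
        rw [Finset.mul_sum]; congr 1; ext i; ring
    _ ≤ ∑ i, μ t i * ⟪gradient (g i) (z t), z t⟫ :=
        Finset.sum_le_sum fun i _ => hterm i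
end
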